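/- Let B be a Banach A-bimodule such that every continuous derivation D : A → B* is weakly compact. If Z^ℓ_{A**}(B**) = B** and every continuous derivation from A** into B*** is inner, then every continuous derivation from A into B* is inner. -/

import Mathlib

open ContinuousLinearMap NormedSpace

noncomputable section

section DualDef

/-- The topological dual `E →L[𝕜] 𝕜` of a normed space (formerly `NormedSpace.Dual`). -/
def Dual (𝕜 : Type*) [NontriviallyNormedField 𝕜] (E : Type*) [NormedAddCommGroup E]
    [NormedSpace 𝕜 E] : Type _ :=
  E →L[𝕜] 𝕜

variable (𝕜 : Type*) [NontriviallyNormedField 𝕜] (E : Type*) [NormedAddCommGroup E]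
  [NormedSpace 𝕜 E]

instance : NormedAddCommGroup (Dual 𝕜 E) := inferInstanceAs (NormedAddCommGroup (E →L[𝕜] 𝕜))

instance : NormedSpace 𝕜 (Dual 𝕜 E) := inferInstanceAs (NormedSpace 𝕜 (E →L[𝕜] 𝕜))

instance : FunLike (Dual 𝕜 E) E 𝕜 := inferInstanceAs (FunLike (E →L[𝕜] 𝕜) E 𝕜)

instance : ContinuousLinearMapClass (Dual 𝕜 E) 𝕜 E 𝕜 :=
  inferInstanceAs (ContinuousLinearMapClass (E →L[𝕜] 𝕜) 𝕜 E 𝕜)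

end DualDef

section Defs

variable {X Y Z W : Type} [NormedAddCommGroup X] [NormedSpace ℝ X]
  [NormedAddCommGroup Y] [NormedSpace ℝ Y] [NormedAddCommGroup Z] [NormedSpace ℝ Z]
  [NormedAddCommGroup W] [NormedSpace ℝ W]

/-- The first adjoint `m^*` of a bounded bilinear map `m : X × Y → Z`,
as a map `Z^* × X → Y^*`, `⟨m^*(z',x), y⟩ = ⟨z', m(x,y)⟩`. -/
def adj1 (m : X →L[ℝ] Y →L[ℝ] Z) :
    Dual ℝ Z →L[ℝ] X →L[ℝ] Dual ℝ Y :=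
  (((ContinuousLinearMap.compL ℝ X (Y →L[ℝ] Z) (Dual ℝ Y)).flip m).comp
    (ContinuousLinearMap.compL ℝ Y Z ℝ))

@[simp] lemma adj1_apply (m : X →L[ℝ] Y →L[ℝ] Z) (z' : Dual ℝ Z) (x : X) (y : Y) :
    adj1 m z' x y = z' (m x y) := rfl

/-- The first (left) Arens extension `m^{***} : X^{**} × Y^{**} → Z^{**}` of a
bounded bilinear map `m : X × Y → Z`. -/
def arens (m : X →L[ℝ] Y →L[ℝ] Z) :
    Dual ℝ (Dual ℝ X) →L[ℝ] Dual ℝ (Dual ℝ Y) →L[ℝ] Dual ℝ (Dual ℝ Z) :=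
  adj1 (adj1 (adj1 m))

/-- The adjoint (dual map) of a bounded linear map. -/
def dualMap' (D : X →L[ℝ] Y) : Dual ℝ Y →L[ℝ] Dual ℝ X :=
  (ContinuousLinearMap.compL ℝ X Y ℝ).flip D

@[simp] lemma dualMap'_apply (D : X →L[ℝ] Y) (g : Dual ℝ Y) (x : X) :
    dualMap' D g x = g (D x) := rfl

/-- The second adjoint `D'' : X^{**} → Y^{**}` of a bounded linear map. -/
def bidualMap (D : X →L[ℝ] Y) : Dual ℝ (Dual ℝ X) →L[ℝ] Dual ℝ (Dual ℝ Y) :=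
  dualMap' (dualMap' D)

/-- Given an action `t : A × X → X`, the transposed action on the dual `X^*`:
`(dualAct t) a f = f ∘ (t a)`. -/
def dualAct (t : W →L[ℝ] X →L[ℝ] X) : W →L[ℝ] Dual ℝ X →L[ℝ] Dual ℝ X :=
  ((ContinuousLinearMap.compL ℝ X X ℝ).flip).comp t

@[simp] lemma dualAct_apply (t : W →L[ℝ] X →L[ℝ] X) (a : W) (f : Dual ℝ X) (x : X) :
    dualAct t a f x = f (t a x) := rfl

/-- `D : A → X` is a derivation with respect to the multiplication `mul'` on `A`
and the left action `l` and right action `r` (`r a x` means `x · a`) of `A` on `X`. -/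
def IsDer {A' : Type} [NormedAddCommGroup A'] [NormedSpace ℝ A']
    (mul' : A' →L[ℝ] A' →L[ℝ] A') (l r : A' →L[ℝ] X →L[ℝ] X) (D : A' →L[ℝ] X) : Prop :=
  ∀ a b : A', D (mul' a b) = l a (D b) + r b (D a)

/-- `D : A → X` is an inner derivation: `D a = a·x - x·a` for some `x`. -/
def IsInner {A' : Type} [NormedAddCommGroup A'] [NormedSpace ℝ A']
    (l r : A' →L[ℝ] X →L[ℝ] X) (D : A' →L[ℝ] X) : Prop :=
  ∃ x : X, ∀ a : A', D a = l a x - r a x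

/-- The bimodule axioms for actions `l`, `r` of an algebra with multiplication `mul'`. -/
def IsBimod {A' : Type} [NormedAddCommGroup A'] [NormedSpace ℝ A']
    (mul' : A' →L[ℝ] A' →L[ℝ] A') (l r : A' →L[ℝ] X →L[ℝ] X) : Prop :=
  (∀ a b x, l (mul' a b) x = l a (l b x)) ∧
  (∀ a b x, r (mul' a b) x = r b (r a x)) ∧
  (∀ a b x, l a (r b x) = r b (l a x))

/-- weak*-to-weak* continuity of a map between dual spaces. -/
def WStarCont (f : Dual ℝ X → Dual ℝ Y) : Prop :=
  ∀ y : Y, Continuous fun φ : WeakDual ℝ X => f φ y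

end Defs

/-- A packaged Banach `A`-bimodule (used to form iterated duals). -/
structure ModPk (A : Type) [NormedAddCommGroup A] [NormedSpace ℝ A] : Type 1 where
  X : Type
  [grp : NormedAddCommGroup X]
  [mod : NormedSpace ℝ X]
  l : A →L[ℝ] X →L[ℝ] X
  r : A →L[ℝ] X →L[ℝ] X

attribute [instance] ModPk.grp ModPk.mod

variable {A : Type} [NormedAddCommGroup A] [NormedSpace ℝ A]

/-- The canonical dual of a packaged bimodule. -/
def ModPk.dual (P : ModPk A) : ModPk A :=
  ⟨Dual ℝ P.X, dualAct P.r, dualAct P.l⟩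

/-- The `n`-th iterated dual of a packaged bimodule. -/
def ModPk.iter (P : ModPk A) : ℕ → ModPk A
  | 0 => P
  | n+1 => (P.iter n).dual

/-- A "level": an algebra (given by its bilinear multiplication) together with a bimodule. -/
structure Lvl : Type 1 where
  Alg : Type
  [g1 : NormedAddCommGroup Alg]
  [m1 : NormedSpace ℝ Alg]
  Mod : Type
  [g2 : NormedAddCommGroup Mod]
  [m2 : NormedSpace ℝ Mod]
  mul : Alg →L[ℝ] Alg →L[ℝ] Alg
  l : Alg →L[ℝ] Mod →L[ℝ] Mod
  r : Alg →L[ℝ] Mod →L[ℝ] Mod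

attribute [instance] Lvl.g1 Lvl.m1 Lvl.g2 Lvl.m2

/-- Passing to second duals: `A^{**}` with the first Arens product, acting on `B^{**}`
via the Arens extensions `π_ℓ^{***}` and `π_r^{***}` of the module actions. -/
def Lvl.double (Q : Lvl) : Lvl where
  Alg := Dual ℝ (Dual ℝ Q.Alg)
  Mod := Dual ℝ (Dual ℝ Q.Mod)
  mul := arens Q.mul
  l := arens Q.l
  r := (arens Q.r.flip).flip

/-- Iterated even duals: `Lvl.iter Q n` is the level `(A^{(2n)}, B^{(2n)})`. -/
def Lvl.iter (Q : Lvl) : ℕ → Lvl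
  | 0 => Q
  | n+1 => (Q.iter n).double

/-- The canonical embedding `A → A^{(2n)}`. -/
def Lvl.embA (Q : Lvl) : (n : ℕ) → Q.Alg →L[ℝ] (Q.iter n).Alg
  | 0 => ContinuousLinearMap.id ℝ _
  | n+1 => (inclusionInDoubleDual ℝ ((Q.iter n).Alg)).comp (Q.embA n)

/-- The canonical embedding `B → B^{(2n)}`. -/
def Lvl.embM (Q : Lvl) : (n : ℕ) → Q.Mod →L[ℝ] (Q.iter n).Mod
  | 0 => ContinuousLinearMap.id ℝ _
  | n+1 => (inclusionInDoubleDual ℝ ((Q.iter n).Mod)).comp (Q.embM n)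

/-- The left-topological-center condition `Z^ℓ_{A^{(2n+2)}}(B^{(2n+2)}) = B^{(2n+2)}`,
stated at the double of a level `Q`: for each `b` in the second-dual module, the map
`a ↦ b·a` is weak*-to-weak* continuous. -/
def Lvl.doubleZl (Q : Lvl) : Prop :=
  ∀ b : (Q.double).Mod, WStarCont (X := Dual ℝ Q.Alg) (Y := Dual ℝ Q.Mod)
    (fun a => (Q.double).r a b)

/-- The base level of a Banach algebra `A` with a Banach `A`-bimodule `B`. -/
def lvlOf (A : Type) [NormedRing A] [NormedAlgebra ℝ A]
    (B : Type) [NormedAddCommGroup B] [NormedSpace ℝ B]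
    (l r : A →L[ℝ] B →L[ℝ] B) : Lvl :=
  Lvl.mk A B (ContinuousLinearMap.mul ℝ A) l r

/-!
For a derivation `D : A → B*` the identity `D''(F □ G) = F · D''G + D''F · G` holds when `F`
comes from `A`. Both sides are weak*-continuous linear functions of `F`: the left side and
`D''F · G` always are, and `F · D''G` is because weak compactness puts `D''G` in `B*` while
`Z^ℓ_{A**}(B**) = B**` makes `F ↦ b'' · F` weak*-continuous. A weak*-continuous functional on
`A**` is evaluation at a point of `A*`, so it is determined by its values on `A`; hence `D''` is
a derivation. It is inner by hypothesis, and restricting an implementing element of `B***` to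
`B` shows that `D` is inner.
-/

@[ext] theorem Dual.ext {E : Type} [NormedAddCommGroup E] [NormedSpace ℝ E] {f g : Dual ℝ E}
    (h : ∀ x, f x = g x) : f = g :=
  ContinuousLinearMap.ext h

theorem exists_eq_apply_of_continuous_weakDual {E : Type} [NormedAddCommGroup E]
    [NormedSpace ℝ E] (φ : Dual ℝ E →ₗ[ℝ] ℝ)
    (hφ : Continuous fun f : WeakDual ℝ E => φ f) : ∃ x : E, ∀ f, φ f = f x := by
  obtain ⟨x, hx⟩ := LinearMap.dualEmbedding_surjective (topDualPairing ℝ E)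
    (⟨φ, hφ⟩ : StrongDual ℝ (WeakDual ℝ E))
  exact ⟨x, fun f => (DFunLike.congr_fun hx f).symm⟩

theorem ContinuousLinearMap.ext_inclusionInDoubleDual_of_wStarCont {E Y : Type}
    [NormedAddCommGroup E] [NormedSpace ℝ E] [NormedAddCommGroup Y] [NormedSpace ℝ Y]
    {f g : Dual ℝ (Dual ℝ E) →L[ℝ] Dual ℝ Y} (hf : WStarCont f) (hg : WStarCont g)
    (h : ∀ x, f (inclusionInDoubleDual ℝ E x) = g (inclusionInDoubleDual ℝ E x)) :
    f = g := by
  ext F y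
  let φ : Dual ℝ (Dual ℝ E) →L[ℝ] ℝ := ContinuousLinearMap.apply ℝ ℝ y ∘L (f - g)
  obtain ⟨ψ, hψ⟩ :=
    exists_eq_apply_of_continuous_weakDual φ.toLinearMap ((hf y).fun_sub (hg y))
  have hψ0 : ψ = 0 := by
    ext x
    have hx : φ (inclusionInDoubleDual ℝ E x) = 0 := by
      show (f _ - g _) y = 0
      rw [h x, sub_self]
      rfl
    exact (hψ _).symm.trans hx
  have := hψ F
  rw [hψ0, map_zero] at this
  exact sub_eq_zero.mp this

theorem wStarCont_bidualMap {X Y : Type} [NormedAddCommGroup X] [NormedSpace ℝ X]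
    [NormedAddCommGroup Y] [NormedSpace ℝ Y] (D : X →L[ℝ] Y) : WStarCont (bidualMap D) :=
  fun y => WeakDual.eval_continuous (dualMap' D y)

section Derivation

variable {B : Type} [NormedAddCommGroup B] [NormedSpace ℝ B]
  {mul : A →L[ℝ] A →L[ℝ] A} {l r : A →L[ℝ] B →L[ℝ] B} {D : A →L[ℝ] Dual ℝ B}

theorem bidualMap_arens_inclusionInDoubleDual_left (hD : IsDer mul (dualAct r) (dualAct l) D)
    (a : A) (G : Dual ℝ (Dual ℝ A)) :
    bidualMap D (arens mul (inclusionInDoubleDual ℝ A a) G) =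
      dualAct (arens r.flip).flip (inclusionInDoubleDual ℝ A a) (bidualMap D G) +
        dualAct (arens l) G (bidualMap D (inclusionInDoubleDual ℝ A a)) := by
  ext b''
  have key : adj1 mul (dualMap' D b'') a =
      dualMap' D (arens r.flip b'' (inclusionInDoubleDual ℝ A a)) + adj1 (adj1 l) b'' (D a) := by
    ext b
    show b'' (D (mul a b)) = _
    rw [hD a b, map_add]
    rfl
  show G (adj1 mul (dualMap' D b'') a) = _
  rw [key, map_add]
  rfl

theorem isDer_bidualMap (hD : IsDer mul (dualAct r) (dualAct l) D)
    (hwc : ∀ G, ∃ b' : Dual ℝ B, bidualMap D G = inclusionInDoubleDual ℝ (Dual ℝ B) b')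
    (hZ : ∀ b'' : Dual ℝ (Dual ℝ B), WStarCont (fun F => (arens r.flip).flip F b'')) :
    IsDer (arens mul) (dualAct (arens r.flip).flip) (dualAct (arens l)) (bidualMap D) := by
  intro F G
  obtain ⟨b', hb'⟩ := hwc G
  let lhs := (bidualMap D).comp ((arens mul).flip G)
  let rhs := (dualAct (arens r.flip).flip).flip (bidualMap D G) +
    (dualAct (arens l) G).comp (bidualMap D)
  have hlhs : WStarCont lhs := fun y => WeakDual.eval_continuous _
  have hrhs : WStarCont rhs := by
    intro y
    show Continuous fun F : WeakDual ℝ (Dual ℝ A) =>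
      bidualMap D G ((arens r.flip).flip F y) + bidualMap D F (arens l G y)
    rw [hb']
    exact (hZ y b').add (wStarCont_bidualMap D _)
  exact DFunLike.congr_fun (ContinuousLinearMap.ext_inclusionInDoubleDual_of_wStarCont hlhs hrhs
    fun a => bidualMap_arens_inclusionInDoubleDual_left hD a G) F

theorem IsInner.of_bidualMap
    (h : IsInner (dualAct (arens r.flip).flip) (dualAct (arens l)) (bidualMap D)) :
    IsInner (dualAct r) (dualAct l) D := by
  obtain ⟨Λ, hΛ⟩ := h
  refine ⟨dualMap' (inclusionInDoubleDual ℝ B) Λ, fun a => ?_⟩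
  ext b
  exact DFunLike.congr_fun (hΛ (inclusionInDoubleDual ℝ A a)) (inclusionInDoubleDual ℝ B b)

end Derivation

theorem stmt9_general (A : Type) [NormedRing A] [NormedAlgebra ℝ A]
    (B : Type) [NormedAddCommGroup B] [NormedSpace ℝ B]
    (l r : A →L[ℝ] B →L[ℝ] B)
    -- every continuous derivation `A → B*` is weakly compact: `D''(A**) ⊆ B*`
    (hwc : ∀ D : A →L[ℝ] Dual ℝ B,
      IsDer (ContinuousLinearMap.mul ℝ A) (dualAct r) (dualAct l) D →
      ∀ F : Dual ℝ (Dual ℝ A), ∃ b' : Dual ℝ B,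
        bidualMap D F = inclusionInDoubleDual ℝ (Dual ℝ B) b')
    -- `Z^ℓ_{A**}(B**) = B**`
    (hZ : ∀ b'' : Dual ℝ (Dual ℝ B),
      WStarCont (X := Dual ℝ A) (Y := Dual ℝ B) (fun F => (arens r.flip).flip F b''))
    -- `H¹(A**, B***) = 0`
    (hcoh : ∀ D2 : Dual ℝ (Dual ℝ A) →L[ℝ] Dual ℝ (Dual ℝ (Dual ℝ B)),
      IsDer (arens (ContinuousLinearMap.mul ℝ A))
        (dualAct (W := Dual ℝ (Dual ℝ A)) (X := Dual ℝ (Dual ℝ B)) ((arens r.flip).flip))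
        (dualAct (W := Dual ℝ (Dual ℝ A)) (X := Dual ℝ (Dual ℝ B)) (arens l)) D2 →
      IsInner
        (dualAct (W := Dual ℝ (Dual ℝ A)) (X := Dual ℝ (Dual ℝ B)) ((arens r.flip).flip))
        (dualAct (W := Dual ℝ (Dual ℝ A)) (X := Dual ℝ (Dual ℝ B)) (arens l)) D2) :
    -- `H¹(A, B*) = 0`
    ∀ D : A →L[ℝ] Dual ℝ B,
      IsDer (ContinuousLinearMap.mul ℝ A) (dualAct r) (dualAct l) D →
      IsInner (dualAct r) (dualAct l) D :=
  fun D hD => IsInner.of_bidualMap (hcoh _ (isDer_bidualMap hD (hwc D hD) hZ))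

/-- **Theorem 2-12.** Let `B` be a Banach `A`-bimodule such that every continuous
derivation `D : A → B*` is weakly compact (`D''(A**) ⊆ B*`). If `Z^ℓ_{A**}(B**) = B**`
and every continuous derivation `A** → B***` is inner, then every continuous derivation
`A → B*` is inner. -/
theorem stmt9 (A : Type) [NormedRing A] [NormedAlgebra ℝ A] [CompleteSpace A]
    (B : Type) [NormedAddCommGroup B] [NormedSpace ℝ B] [CompleteSpace B]
    (l r : A →L[ℝ] B →L[ℝ] B)
    (hbim : IsBimod (ContinuousLinearMap.mul ℝ A) l r)
    -- every continuous derivation `A → B*` is weakly compact: `D''(A**) ⊆ B*`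
    (hwc : ∀ D : A →L[ℝ] Dual ℝ B,
      IsDer (ContinuousLinearMap.mul ℝ A) (dualAct r) (dualAct l) D →
      ∀ F : Dual ℝ (Dual ℝ A), ∃ b' : Dual ℝ B,
        bidualMap D F = inclusionInDoubleDual ℝ (Dual ℝ B) b')
    -- `Z^ℓ_{A**}(B**) = B**`
    (hZ : ∀ b'' : Dual ℝ (Dual ℝ B),
      WStarCont (X := Dual ℝ A) (Y := Dual ℝ B) (fun F => (arens r.flip).flip F b''))
    -- `H¹(A**, B***) = 0`
    (hcoh : ∀ D2 : Dual ℝ (Dual ℝ A) →L[ℝ] Dual ℝ (Dual ℝ (Dual ℝ B)),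
      IsDer (arens (ContinuousLinearMap.mul ℝ A))
        (dualAct (W := Dual ℝ (Dual ℝ A)) (X := Dual ℝ (Dual ℝ B)) ((arens r.flip).flip))
        (dualAct (W := Dual ℝ (Dual ℝ A)) (X := Dual ℝ (Dual ℝ B)) (arens l)) D2 →
      IsInner
        (dualAct (W := Dual ℝ (Dual ℝ A)) (X := Dual ℝ (Dual ℝ B)) ((arens r.flip).flip))
        (dualAct (W := Dual ℝ (Dual ℝ A)) (X := Dual ℝ (Dual ℝ B)) (arens l)) D2) :
    -- `H¹(A, B*) = 0`
    ∀ D : A →L[ℝ] Dual ℝ B,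
      IsDer (ContinuousLinearMap.mul ℝ A) (dualAct r) (dualAct l) D →
      IsInner (dualAct r) (dualAct l) D :=
  stmt9_general A B l r hwc hZ hcoh
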